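/- Let φ: R' → R be a component-wise isomorphic epimorphism of graded rings accompanied by a group epimorphism ψ: K' → K. Then the assignments a' ↦ φ(a') and a ↦ ⟨φ^{-1}(a) ∩ R'^+⟩ are mutually inverse bijections between the set of K'-graded ideals of R' and the set of K-graded ideals of R, and these bijections respect inclusions, sums, products, and intersections. -/

import Mathlib

/-!
Every homogeneous ideal of `R'` is generated by its homogeneous elements, and `φ` is injective on
each component, so the whole argument reduces to one fact: a homogeneous `r' ∈ 𝒜' w'` with
`φ r' ∈ φ(a')` already lies in `a'`. Indeed, write `φ r' = φ x` with `x ∈ a'` and compare the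
`ψ w'`-components: `φ r'` is the sum of the `φ xᵥ` over the degrees `v` with `ψ v = ψ w'`.
Multiplying each `xᵥ` by a lift `uᵥ ∈ 𝒜' (w' - v)` of `1` moves it to degree `w'` without changing
its image, so `∑ uᵥ xᵥ` is an element of `a' ∩ 𝒜' w'` with the same image as `r'`, hence equal to
`r'`. Everything else follows formally, intersections included: `φ(a') ⊓ φ(b')` is homogeneous,
hence the image of an ideal contained in both `a'` and `b'`.
-/

open DirectSum

/-- The paper's `⟨φ⁻¹(a) ∩ R'⁺⟩`. -/
def gradedComap {K' R' R : Type*} [Ring R'] [Semiring R] (𝒜' : K' → AddSubgroup R')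
    (φ : R' →+* R) (a : Ideal R) : Ideal R' :=
  Ideal.span (φ ⁻¹' (a : Set R) ∩ {r : R' | SetLike.IsHomogeneousElem 𝒜' r ∧ r ≠ 0})

section GradedComap

variable {K' K R' R : Type*} [Ring R'] [Ring R]

theorem gradedComap_mono {𝒜' : K' → AddSubgroup R'} {φ : R' →+* R} {a b : Ideal R}
    (h : a ≤ b) : gradedComap 𝒜' φ a ≤ gradedComap 𝒜' φ b :=
  Ideal.span_mono (Set.inter_subset_inter_left _ (Set.preimage_mono h))

theorem map_gradedComap_le (𝒜' : K' → AddSubgroup R') (φ : R' →+* R) (a : Ideal R) :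
    (gradedComap 𝒜' φ a).map φ ≤ a := by
  rw [gradedComap, Ideal.map_span, Ideal.span_le]
  rintro _ ⟨r, ⟨hr, -⟩, rfl⟩
  exact hr

variable [AddMonoid K'] [AddMonoid K] [DecidableEq K]
  {𝒜' : K' → AddSubgroup R'} {𝒜 : K → AddSubgroup R} [GradedRing 𝒜] {φ : R' →+* R} {ψ : K' →+ K}

theorem le_map_gradedComap (hψ : Function.Surjective ψ)
    (hsur : ∀ (w' : K') (y : R), y ∈ 𝒜 (ψ w') → ∃ r ∈ 𝒜' w', φ r = y)
    {a : Ideal R} (ha : a.IsHomogeneous 𝒜) : a ≤ (gradedComap 𝒜' φ a).map φ := by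
  classical
  intro y hy
  rw [← sum_support_decompose 𝒜 y]
  refine Ideal.sum_mem _ fun i hi => ?_
  obtain ⟨w', rfl⟩ := hψ i
  obtain ⟨r', hr', hr'y⟩ := hsur w' _ (SetLike.coe_mem (decompose 𝒜 y (ψ w')))
  have hr'0 : r' ≠ 0 := by
    rintro rfl
    exact DFinsupp.mem_support_iff.1 hi (Subtype.ext (by rw [← hr'y, map_zero]; rfl))
  rw [← hr'y]
  exact Ideal.mem_map_of_mem φ (Ideal.subset_span ⟨by simpa [hr'y] using ha _ hy, ⟨w', hr'⟩, hr'0⟩)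

variable [DecidableEq K'] [GradedRing 𝒜']

theorem gradedComap_isHomogeneous (a : Ideal R) : (gradedComap 𝒜' φ a).IsHomogeneous 𝒜' :=
  Ideal.homogeneous_span 𝒜' _ fun _ hr => hr.2.1

theorem le_gradedComap_map {a' : Ideal R'} (ha' : a'.IsHomogeneous 𝒜') :
    a' ≤ gradedComap 𝒜' φ (a'.map φ) := by
  classical
  intro r hr
  rw [← sum_support_decompose 𝒜' r]
  refine Ideal.sum_mem _ fun v hv => Ideal.subset_span ⟨Ideal.mem_map_of_mem φ (ha' v hr),
    ⟨v, SetLike.coe_mem _⟩, fun h0 => DFinsupp.mem_support_iff.1 hv (Subtype.ext h0)⟩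

theorem decompose_map_eq_sum [∀ (i : K') (x : 𝒜' i), Decidable (x ≠ 0)]
    (hmap : ∀ (w' : K') (r : R'), r ∈ 𝒜' w' → φ r ∈ 𝒜 (ψ w')) (x : R') (i : K) :
    (decompose 𝒜 (φ x) i : R) =
      ∑ v ∈ (decompose 𝒜' x).support with ψ v = i, φ (decompose 𝒜' x v : R') := by
  conv_lhs => rw [← sum_support_decompose 𝒜' x]
  rw [map_sum, decompose_sum, DFinsupp.finsetSum_apply, AddSubmonoidClass.coe_finsetSum,
    Finset.sum_filter]
  refine Finset.sum_congr rfl fun v _ => ?_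
  have hv := hmap v _ (SetLike.coe_mem (decompose 𝒜' x v))
  split_ifs with h
  · exact decompose_of_mem_same 𝒜 (h ▸ hv)
  · exact decompose_of_mem_ne 𝒜 hv h

theorem Ideal.IsHomogeneous.map_of_surjective (hφ : Function.Surjective φ)
    (hmap : ∀ (w' : K') (r : R'), r ∈ 𝒜' w' → φ r ∈ 𝒜 (ψ w'))
    {a' : Ideal R'} (ha' : a'.IsHomogeneous 𝒜') : (a'.map φ).IsHomogeneous 𝒜 := by
  classical
  intro i y hy
  obtain ⟨x, hx, rfl⟩ := (Ideal.mem_map_iff_of_surjective φ hφ).1 hy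
  rw [decompose_map_eq_sum hmap]
  exact Ideal.sum_mem _ fun v _ => Ideal.mem_map_of_mem φ (ha' v hx)

end GradedComap

theorem exists_mem_graded_sub_apply_eq_one {K' K R' R : Type*} [AddGroup K'] [AddGroup K]
    [Ring R'] [Ring R] {𝒜' : K' → AddSubgroup R'} {𝒜 : K → AddSubgroup R} [SetLike.GradedOne 𝒜]
    {φ : R' →+* R} {ψ : K' →+ K}
    (hsur : ∀ (w' : K') (y : R), y ∈ 𝒜 (ψ w') → ∃ r ∈ 𝒜' w', φ r = y)
    {v w' : K'} (h : ψ v = ψ w') : ∃ u ∈ 𝒜' (w' - v), φ u = 1 :=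
  hsur (w' - v) 1 (by rw [map_sub, h, sub_self]; exact SetLike.GradedOne.one_mem)

section Groups

variable {K' K R' R : Type*} [AddGroup K'] [DecidableEq K'] [AddGroup K] [DecidableEq K]
  [Ring R'] [Ring R]
  {𝒜' : K' → AddSubgroup R'} [GradedRing 𝒜'] {𝒜 : K → AddSubgroup R} [GradedRing 𝒜]
  {φ : R' →+* R} {ψ : K' →+ K}

theorem Ideal.IsHomogeneous.mem_of_apply_mem_map (hφ : Function.Surjective φ)
    (hmap : ∀ (w' : K') (r : R'), r ∈ 𝒜' w' → φ r ∈ 𝒜 (ψ w'))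
    (hinj : ∀ (w' : K') (r s : R'), r ∈ 𝒜' w' → s ∈ 𝒜' w' → φ r = φ s → r = s)
    (hsur : ∀ (w' : K') (y : R), y ∈ 𝒜 (ψ w') → ∃ r ∈ 𝒜' w', φ r = y)
    {a' : Ideal R'} (ha' : a'.IsHomogeneous 𝒜') {w' : K'} {r' : R'} (hr' : r' ∈ 𝒜' w')
    (hmem : φ r' ∈ a'.map φ) : r' ∈ a' := by
  classical
  obtain ⟨x, hx, hxr'⟩ := (Ideal.mem_map_iff_of_surjective φ hφ).1 hmem
  choose! u hu using fun v (h : ψ v = ψ w') => exists_mem_graded_sub_apply_eq_one hsur h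
  set s := {v ∈ (decompose 𝒜' x).support | ψ v = ψ w'}
  have hψs : ∀ v ∈ s, ψ v = ψ w' := fun v hv => (Finset.mem_filter.1 hv).2
  set z : R' := ∑ v ∈ s, u v * (decompose 𝒜' x v : R')
  have hz : z ∈ 𝒜' w' := AddSubgroup.sum_mem _ fun v hv => by
    simpa using SetLike.mul_mem_graded (hu v (hψs v hv)).1 (SetLike.coe_mem (decompose 𝒜' x v))
  have hza : z ∈ a' := Ideal.sum_mem _ fun v _ => Ideal.mul_mem_left _ _ (ha' v hx)
  have hφz : φ z = φ r' := calc
    φ z = ∑ v ∈ s, φ (decompose 𝒜' x v : R') := by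
      rw [map_sum]
      exact Finset.sum_congr rfl fun v hv => by rw [map_mul, (hu v (hψs v hv)).2, one_mul]
    _ = decompose 𝒜 (φ x) (ψ w') := (decompose_map_eq_sum hmap x (ψ w')).symm
    _ = φ r' := by rw [hxr', decompose_of_mem_same 𝒜 (hmap w' r' hr')]
  rwa [hinj w' r' z hr' hz hφz.symm]

theorem gradedComap_map (hφ : Function.Surjective φ)
    (hmap : ∀ (w' : K') (r : R'), r ∈ 𝒜' w' → φ r ∈ 𝒜 (ψ w'))
    (hinj : ∀ (w' : K') (r s : R'), r ∈ 𝒜' w' → s ∈ 𝒜' w' → φ r = φ s → r = s)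
    (hsur : ∀ (w' : K') (y : R), y ∈ 𝒜 (ψ w') → ∃ r ∈ 𝒜' w', φ r = y)
    {a' : Ideal R'} (ha' : a'.IsHomogeneous 𝒜') : gradedComap 𝒜' φ (a'.map φ) = a' := by
  refine le_antisymm (Ideal.span_le.2 ?_) (le_gradedComap_map ha')
  rintro r ⟨hr, ⟨w', hw'⟩, -⟩
  exact ha'.mem_of_apply_mem_map hφ hmap hinj hsur hw' hr

theorem map_le_map_iff_of_isHomogeneous (hφ : Function.Surjective φ)
    (hmap : ∀ (w' : K') (r : R'), r ∈ 𝒜' w' → φ r ∈ 𝒜 (ψ w'))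
    (hinj : ∀ (w' : K') (r s : R'), r ∈ 𝒜' w' → s ∈ 𝒜' w' → φ r = φ s → r = s)
    (hsur : ∀ (w' : K') (y : R), y ∈ 𝒜 (ψ w') → ∃ r ∈ 𝒜' w', φ r = y)
    {a' b' : Ideal R'} (ha' : a'.IsHomogeneous 𝒜') (hb' : b'.IsHomogeneous 𝒜') :
    a'.map φ ≤ b'.map φ ↔ a' ≤ b' := by
  refine ⟨fun h => ?_, Ideal.map_mono⟩
  rw [← gradedComap_map hφ hmap hinj hsur ha', ← gradedComap_map hφ hmap hinj hsur hb']
  exact gradedComap_mono h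

theorem map_inf_of_isHomogeneous (hψ : Function.Surjective ψ) (hφ : Function.Surjective φ)
    (hmap : ∀ (w' : K') (r : R'), r ∈ 𝒜' w' → φ r ∈ 𝒜 (ψ w'))
    (hinj : ∀ (w' : K') (r s : R'), r ∈ 𝒜' w' → s ∈ 𝒜' w' → φ r = φ s → r = s)
    (hsur : ∀ (w' : K') (y : R), y ∈ 𝒜 (ψ w') → ∃ r ∈ 𝒜' w', φ r = y)
    {a' b' : Ideal R'} (ha' : a'.IsHomogeneous 𝒜') (hb' : b'.IsHomogeneous 𝒜') :
    (a' ⊓ b').map φ = a'.map φ ⊓ b'.map φ := by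
  refine le_antisymm (le_inf (Ideal.map_mono inf_le_left) (Ideal.map_mono inf_le_right)) ?_
  have hc := (ha'.map_of_surjective hφ hmap).inf (hb'.map_of_surjective hφ hmap)
  refine (le_map_gradedComap hψ hsur hc).trans (Ideal.map_mono (le_inf ?_ ?_))
  · exact (gradedComap_mono inf_le_left).trans_eq (gradedComap_map hφ hmap hinj hsur ha')
  · exact (gradedComap_mono inf_le_right).trans_eq (gradedComap_map hφ hmap hinj hsur hb')

end Groups

theorem stmt_6 {K' K R' R : Type*} [AddCommGroup K'] [DecidableEq K'] [AddCommGroup K]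
    [DecidableEq K] [CommRing R'] [CommRing R]
    (𝒜' : K' → AddSubgroup R') [GradedRing 𝒜'] (𝒜 : K → AddSubgroup R) [GradedRing 𝒜]
    (φ : R' →+* R) (ψ : K' →+ K) (hψ : Function.Surjective ψ)
    (hφ : Function.Surjective φ)
    (hmap : ∀ (w' : K') (r : R'), r ∈ 𝒜' w' → φ r ∈ 𝒜 (ψ w'))
    (hinj : ∀ (w' : K') (r s : R'), r ∈ 𝒜' w' → s ∈ 𝒜' w' → φ r = φ s → r = s)
    (hsur : ∀ (w' : K') (y : R), y ∈ 𝒜 (ψ w') → ∃ r ∈ 𝒜' w', φ r = y) :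
    letI G : Ideal R → Ideal R' :=
      fun a => Ideal.span (φ ⁻¹' (a : Set R) ∩ {r : R' | SetLike.IsHomogeneousElem 𝒜' r ∧ r ≠ 0})
    -- the maps preserve gradedness
    (∀ a' : Ideal R', Ideal.IsHomogeneous 𝒜' a' → Ideal.IsHomogeneous 𝒜 (Ideal.map φ a')) ∧
    (∀ a : Ideal R, Ideal.IsHomogeneous 𝒜 a → Ideal.IsHomogeneous 𝒜' (G a)) ∧
    -- mutually inverse
    (∀ a' : Ideal R', Ideal.IsHomogeneous 𝒜' a' → G (Ideal.map φ a') = a') ∧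
    (∀ a : Ideal R, Ideal.IsHomogeneous 𝒜 a → Ideal.map φ (G a) = a) ∧
    -- respect inclusions, sums, products and intersections
    (∀ a' b' : Ideal R', Ideal.IsHomogeneous 𝒜' a' → Ideal.IsHomogeneous 𝒜' b' →
      ((a' ≤ b' ↔ Ideal.map φ a' ≤ Ideal.map φ b') ∧
        Ideal.map φ (a' ⊔ b') = Ideal.map φ a' ⊔ Ideal.map φ b' ∧
        Ideal.map φ (a' * b') = Ideal.map φ a' * Ideal.map φ b' ∧
        Ideal.map φ (a' ⊓ b') = Ideal.map φ a' ⊓ Ideal.map φ b')) :=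
  ⟨fun _ ha' => ha'.map_of_surjective hφ hmap,
    fun a _ => gradedComap_isHomogeneous a,
    fun _ ha' => gradedComap_map hφ hmap hinj hsur ha',
    fun a ha => le_antisymm (map_gradedComap_le 𝒜' φ a) (le_map_gradedComap hψ hsur ha),
    fun a' b' ha' hb' => ⟨(map_le_map_iff_of_isHomogeneous hφ hmap hinj hsur ha' hb').symm,
      Ideal.map_sup φ a' b', Ideal.map_mul φ a' b',
      map_inf_of_isHomogeneous hψ hφ hmap hinj hsur ha' hb'⟩⟩
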